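/- arXiv:1011.6313 — 6 statements merged into one kernel-verified Lean document; each statement's English description precedes it below -/
import Mathlib

section
/- For positive definite matrices A, B, and p with 1 ≤ p ≤ 2 and t ∈ [0,1], letting μ = (t·A^p + (1-t)·B^p)^(1/p), one has trace(μ²) ≤ t·trace(A²) + (1-t)·trace(B²). -/
open Matrix MeasureTheory
open scoped ComplexOrder

/-- Apply a real function to a Hermitian matrix via the spectral decomposition. -/
noncomputable def matFun {n : ℕ} (A : Matrix (Fin n) (Fin n) ℂ) (hA : A.IsHermitian)
    (g : ℝ → ℝ) : Matrix (Fin n) (Fin n) ℂ :=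
  (hA.eigenvectorUnitary : Matrix (Fin n) (Fin n) ℂ) *
    Matrix.diagonal (fun i => (g (hA.eigenvalues i) : ℂ)) *
    star (hA.eigenvectorUnitary : Matrix (Fin n) (Fin n) ℂ)

/-- Real power of a Hermitian matrix via the spectral decomposition. -/
noncomputable def mpow {n : ℕ} (A : Matrix (Fin n) (Fin n) ℂ) (hA : A.IsHermitian)
    (p : ℝ) : Matrix (Fin n) (Fin n) ℂ :=
  matFun A hA (fun x => x ^ p)

/-- Hilbert-Schmidt (Frobenius) norm of a matrix. -/
noncomputable def frob {n : ℕ} (X : Matrix (Fin n) (Fin n) ℂ) : ℝ :=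
  Real.sqrt (Matrix.trace (star X * X)).re

/-!
Diagonalize `M = t A^p + (1-t) B^p = U diag(λ) U*`. Then `λ_i = (U* M U)_ii = t a_i + (1-t) b_i`
with `a_i = (U* A^p U)_ii`, `b_i = (U* B^p U)_ii`, and convexity of `x ↦ x^(2/p)` (as `2/p ≥ 1`)
gives `λ_i^(2/p) ≤ t a_i^(2/p) + (1-t) b_i^(2/p)`. Each `a_i` is a convex combination of the
eigenvalues `α_j^p` of `A^p`, with weights `|(U* W)_ij|²` forming a doubly stochastic matrix
(`W` the eigenvector unitary of `A`). So Jensen's inequality and summation over `i` give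
`∑ a_i^(2/p) ≤ ∑ α_j^2 = tr A²` (Peierls' inequality), and likewise for `B`.
-/

section

variable {ι : Type*} [Fintype ι]

lemma re_diag_conj_smul_add_smul (U X Y : Matrix ι ι ℂ) (a b : ℝ) (i : ι) :
    ((star U * (a • X + b • Y) * U) i i).re =
      a * ((star U * X * U) i i).re + b * ((star U * Y * U) i i).re := by
  rw [mul_add, add_mul, Matrix.mul_smul, Matrix.mul_smul, Matrix.smul_mul, Matrix.smul_mul,
    Matrix.add_apply, Matrix.smul_apply, Matrix.smul_apply, Complex.add_re, Complex.real_smul,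
    Complex.real_smul, Complex.re_ofReal_mul, Complex.re_ofReal_mul]

variable [DecidableEq ι]

lemma normSq_mem_doublyStochastic_of_mem_unitary {U : Matrix ι ι ℂ}
    (hU : U ∈ unitary (Matrix ι ι ℂ)) :
    Matrix.of (fun i j => Complex.normSq (U i j)) ∈ doublyStochastic ℝ ι := by
  rw [mem_doublyStochastic_iff_sum]
  refine ⟨fun i j => Complex.normSq_nonneg _, fun i => ?_, fun j => ?_⟩
  · have := congrArg (fun X : Matrix ι ι ℂ => (X i i).re) (Unitary.mul_star_self_of_mem hU)
    simpa [mul_apply, Complex.mul_conj] using this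
  · have := congrArg (fun X : Matrix ι ι ℂ => (X j j).re) (Unitary.star_mul_self_of_mem hU)
    simpa [mul_apply, Complex.conj_mul', Complex.normSq_eq_norm_sq, ← Complex.ofReal_pow]
      using this

lemma mul_diagonal_mul_star_apply_self (V : Matrix ι ι ℂ) (d : ι → ℂ) (i : ι) :
    (V * diagonal d * star V) i i = ∑ j, (Complex.normSq (V i j) : ℂ) * d j := by
  rw [mul_apply]
  simp only [mul_diagonal, star_apply, Complex.star_def]
  refine Finset.sum_congr rfl fun j _ => ?_
  rw [Complex.normSq_eq_conj_mul_self]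
  ring

end

section MatFun

variable {n : ℕ} {A : Matrix (Fin n) (Fin n) ℂ} (hA : A.IsHermitian)

lemma matFun_mul (g h : ℝ → ℝ) :
    matFun A hA g * matFun A hA h = matFun A hA (fun x => g x * h x) := by
  simp only [matFun, mul_assoc]
  rw [← mul_assoc (star _) (hA.eigenvectorUnitary : Matrix (Fin n) (Fin n) ℂ),
    Unitary.coe_star_mul_self, one_mul, ← mul_assoc (diagonal _), diagonal_mul_diagonal]
  simp

lemma re_trace_matFun (g : ℝ → ℝ) :
    (trace (matFun A hA g)).re = ∑ i, g (hA.eigenvalues i) := by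
  rw [matFun, trace_mul_cycle, Unitary.coe_star_mul_self, one_mul, trace_diagonal]
  simp

lemma matFun_id : matFun A hA (fun x => x) = A := by
  conv_rhs => rw [hA.spectral_theorem]
  rfl

lemma re_trace_matFun_mul_self (g : ℝ → ℝ) :
    (trace (matFun A hA g * matFun A hA g)).re = ∑ i, g (hA.eigenvalues i) ^ 2 := by
  simp only [matFun_mul, re_trace_matFun, sq]

lemma re_trace_mul_self : (trace (A * A)).re = ∑ i, hA.eigenvalues i ^ 2 := by
  conv_lhs => rw [← matFun_id hA]
  exact re_trace_matFun_mul_self hA _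

noncomputable def eigenOverlap (U : Matrix (Fin n) (Fin n) ℂ) : Matrix (Fin n) (Fin n) ℝ :=
  Matrix.of fun i j =>
    Complex.normSq ((star U * (hA.eigenvectorUnitary : Matrix (Fin n) (Fin n) ℂ)) i j)

lemma eigenOverlap_mem_doublyStochastic {U : Matrix (Fin n) (Fin n) ℂ}
    (hU : U ∈ unitary (Matrix (Fin n) (Fin n) ℂ)) :
    eigenOverlap hA U ∈ doublyStochastic ℝ (Fin n) :=
  normSq_mem_doublyStochastic_of_mem_unitary
    (Submonoid.mul_mem _ (Unitary.star_mem hU) hA.eigenvectorUnitary.2)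

lemma re_diag_conj_matFun (g : ℝ → ℝ) (U : Matrix (Fin n) (Fin n) ℂ) (i : Fin n) :
    ((star U * matFun A hA g * U) i i).re =
      ∑ j, eigenOverlap hA U i j * g (hA.eigenvalues j) := by
  let V := star U * (hA.eigenvectorUnitary : Matrix (Fin n) (Fin n) ℂ)
  have : star U * matFun A hA g * U =
      V * diagonal (fun j => (g (hA.eigenvalues j) : ℂ)) * star V := by
    simp [V, matFun, mul_assoc]
  rw [this, mul_diagonal_mul_star_apply_self]
  simp [V, eigenOverlap, ← Complex.ofReal_mul]

lemma Matrix.IsHermitian.eigenvalues_eq_re_diag_conj (i : Fin n) :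
    hA.eigenvalues i = ((star (hA.eigenvectorUnitary : Matrix (Fin n) (Fin n) ℂ) * A *
      hA.eigenvectorUnitary) i i).re := by
  have := hA.conjStarAlgAut_star_eigenvectorUnitary
  rw [Unitary.conjStarAlgAut_apply, Unitary.coe_star, star_star] at this
  simp [this]

variable {U : Matrix (Fin n) (Fin n) ℂ}

lemma re_diag_conj_matFun_mem (hU : U ∈ unitary (Matrix (Fin n) (Fin n) ℂ)) {s : Set ℝ}
    (hs : Convex ℝ s) {g : ℝ → ℝ} (hg : ∀ j, g (hA.eigenvalues j) ∈ s) (i : Fin n) :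
    ((star U * matFun A hA g * U) i i).re ∈ s := by
  have hW := eigenOverlap_mem_doublyStochastic hA hU
  rw [re_diag_conj_matFun]
  exact hs.sum_mem (fun j _ => nonneg_of_mem_doublyStochastic hW)
    (sum_row_of_mem_doublyStochastic hW i) fun j _ => hg j

lemma ConvexOn.sum_map_re_diag_conj_matFun_le {s : Set ℝ} {f g : ℝ → ℝ}
    (hf : ConvexOn ℝ s f) (hU : U ∈ unitary (Matrix (Fin n) (Fin n) ℂ))
    (hg : ∀ j, g (hA.eigenvalues j) ∈ s) :
    ∑ i, f ((star U * matFun A hA g * U) i i).re ≤ ∑ j, f (g (hA.eigenvalues j)) := by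
  have hW := eigenOverlap_mem_doublyStochastic hA hU
  calc ∑ i, f ((star U * matFun A hA g * U) i i).re
      ≤ ∑ i, ∑ j, eigenOverlap hA U i j * f (g (hA.eigenvalues j)) := by
        refine Finset.sum_le_sum fun i _ => ?_
        rw [re_diag_conj_matFun]
        exact hf.map_sum_le (fun j _ => nonneg_of_mem_doublyStochastic hW)
          (sum_row_of_mem_doublyStochastic hW i) fun j _ => hg j
    _ = ∑ j, f (g (hA.eigenvalues j)) := sum_mulVec_of_mem_doublyStochastic hW

end MatFun

section MPow

variable {n : ℕ} {A U : Matrix (Fin n) (Fin n) ℂ}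

lemma re_diag_conj_mpow_nonneg (hA : A.PosSemidef) (hU : U ∈ unitary (Matrix (Fin n) (Fin n) ℂ))
    (p : ℝ) (i : Fin n) : 0 ≤ ((star U * mpow A hA.1 p * U) i i).re :=
  re_diag_conj_matFun_mem hA.1 hU (convex_Ici 0)
    (fun j => Real.rpow_nonneg (hA.eigenvalues_nonneg j) p) i

lemma sum_re_diag_conj_mpow_rpow_le (hA : A.PosSemidef)
    (hU : U ∈ unitary (Matrix (Fin n) (Fin n) ℂ)) {p : ℝ} (hp0 : 0 < p) (hp2 : p ≤ 2) :
    ∑ i, ((star U * mpow A hA.1 p * U) i i).re ^ (2 / p) ≤ (trace (A * A)).re := by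
  have hq : 1 ≤ 2 / p := by rw [le_div_iff₀ hp0]; linarith
  rw [re_trace_mul_self hA.1]
  refine ((convexOn_rpow hq).sum_map_re_diag_conj_matFun_le hA.1 hU
    fun j => Real.rpow_nonneg (hA.eigenvalues_nonneg j) p).trans_eq ?_
  refine Finset.sum_congr rfl fun j _ => ?_
  rw [← Real.rpow_mul (hA.eigenvalues_nonneg j), mul_div_cancel₀ _ hp0.ne', Real.rpow_two]

end MPow

theorem stmt2 {n : ℕ} (A B : Matrix (Fin n) (Fin n) ℂ)
    (hA : A.PosDef) (hB : B.PosDef) (p t : ℝ)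
    (hp : p ∈ Set.Icc (1:ℝ) 2) (ht : t ∈ Set.Icc (0:ℝ) 1)
    (hM : (t • mpow A hA.1 p + (1 - t) • mpow B hB.1 p).IsHermitian) :
    (Matrix.trace (mpow _ hM (1/p) * mpow _ hM (1/p))).re ≤
      t * (Matrix.trace (A * A)).re + (1 - t) * (Matrix.trace (B * B)).re := by
  obtain ⟨hp1, hp2⟩ := hp
  obtain ⟨ht0, ht1⟩ := ht
  have hp0 : 0 < p := by linarith
  set U := (hM.eigenvectorUnitary : Matrix (Fin n) (Fin n) ℂ)
  have hU : U ∈ unitary (Matrix (Fin n) (Fin n) ℂ) := hM.eigenvectorUnitary.2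
  set a := fun i => ((star U * mpow A hA.1 p * U) i i).re
  set b := fun i => ((star U * mpow B hB.1 p * U) i i).re
  have ha : ∀ i, 0 ≤ a i := re_diag_conj_mpow_nonneg hA.posSemidef hU p
  have hb : ∀ i, 0 ≤ b i := re_diag_conj_mpow_nonneg hB.posSemidef hU p
  have heig : ∀ i, hM.eigenvalues i = t * a i + (1 - t) * b i := fun i => by
    rw [hM.eigenvalues_eq_re_diag_conj, re_diag_conj_smul_add_smul]
  have hf : ConvexOn ℝ (Set.Ici 0) fun x : ℝ => x ^ (2 / p) :=
    convexOn_rpow (by rw [le_div_iff₀ hp0]; linarith)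
  calc (trace (mpow _ hM (1/p) * mpow _ hM (1/p))).re
      = ∑ i, (t * a i + (1 - t) * b i) ^ (2 / p) := by
        refine (re_trace_matFun_mul_self hM _).trans (Finset.sum_congr rfl fun i _ => ?_)
        have hpos : 0 ≤ t * a i + (1 - t) * b i :=
          add_nonneg (mul_nonneg ht0 (ha i)) (mul_nonneg (by linarith) (hb i))
        rw [heig, ← Real.rpow_mul_natCast hpos, Nat.cast_ofNat, one_div_mul_eq_div]
    _ ≤ ∑ i, (t * a i ^ (2 / p) + (1 - t) * b i ^ (2 / p)) :=
        Finset.sum_le_sum fun i _ => by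
          simpa only [smul_eq_mul] using hf.2 (ha i) (hb i) ht0 (by linarith) (by ring)
    _ = t * ∑ i, a i ^ (2 / p) + (1 - t) * ∑ i, b i ^ (2 / p) := by
        rw [Finset.sum_add_distrib, Finset.mul_sum, Finset.mul_sum]
    _ ≤ t * (trace (A * A)).re + (1 - t) * (trace (B * B)).re := by
        have hA2 := sum_re_diag_conj_mpow_rpow_le hA.posSemidef hU hp0 hp2
        have hB2 := sum_re_diag_conj_mpow_rpow_le hB.posSemidef hU hp0 hp2
        exact add_le_add (mul_le_mul_of_nonneg_left hA2 ht0)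
          (mul_le_mul_of_nonneg_left hB2 (by linarith))
end

section
/- For positive definite matrices A, B, real p with 1 ≤ p ≤ 2, and t ∈ [0,1], the weighted p-power mean μ_p(A,B,t) = (t·A^p + (1-t)·B^p)^(1/p) satisfies trace((A - μ_p(A,B,t))²) ≤ trace((A - B)²). -/
open Matrix MeasureTheory
open scoped ComplexOrder

/-!
Expanding both squares, it suffices to show `tr μ² ≤ t tr A² + (1 - t) tr B²` and
`t tr A² + (1 - t) tr (A B) ≤ tr (A μ)` for `μ = (t A ^ p + (1 - t) B ^ p) ^ (1 / p)`: the
difference of the two sides is then at least `t tr (A - B)² ≥ 0`.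

Since `1 / p ∈ [1/2, 1]`, `x ↦ x ^ (1 / p)` is operator concave, so `t A + (1 - t) B ≤ μ`, and
pairing with `A ≥ 0` gives the second estimate. The first is the trace Jensen inequality
`tr f (t X + (1 - t) Y) ≤ t tr f X + (1 - t) tr f Y` for the convex `f x = x ^ (2 / p)` and
`X = A ^ p`, `Y = B ^ p`: evaluate the left side on an eigenbasis `u` of `t X + (1 - t) Y`, use
convexity of `f` at `⟪u, X u⟫` and `⟪u, Y u⟫`, and then Jensen's inequality
`f ⟪u, X u⟫ ≤ ⟪u, f X u⟫` for the spectral distribution of `X` in the unit vector `u`.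
-/

open scoped MatrixOrder

namespace Matrix.IsHermitian

variable {𝕜 : Type*} [RCLike 𝕜] {n : Type*} [Fintype n] [DecidableEq n] {A : Matrix n n 𝕜}

lemma re_dotProduct_cfc_mulVec (hA : A.IsHermitian) (f : ℝ → ℝ) (v : n → 𝕜) :
    RCLike.re (star v ⬝ᵥ cfc f A *ᵥ v) =
      ∑ i, ‖(star (hA.eigenvectorUnitary : Matrix n n 𝕜) *ᵥ v) i‖ ^ 2 * f (hA.eigenvalues i) := by
  set U : Matrix n n 𝕜 := (hA.eigenvectorUnitary : Matrix n n 𝕜)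
  have hU : star v ᵥ* U = star (star U *ᵥ v) := by
    rw [star_mulVec, star_eq_conjTranspose, conjTranspose_conjTranspose]
  rw [hA.cfc_eq, IsHermitian.cfc, Unitary.conjStarAlgAut_apply, ← mulVec_mulVec, ← mulVec_mulVec,
    dotProduct_mulVec, hU]
  simp only [dotProduct, mulVec_diagonal, Pi.star_apply, map_sum, Function.comp_apply]
  refine Finset.sum_congr rfl fun i _ => ?_
  rw [mul_left_comm, RCLike.star_def, RCLike.conj_mul, mul_comm]
  norm_cast

lemma sum_norm_sq_star_eigenvectorUnitary_mulVec (hA : A.IsHermitian) (v : n → 𝕜) :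
    ∑ i, ‖(star (hA.eigenvectorUnitary : Matrix n n 𝕜) *ᵥ v) i‖ ^ 2 = RCLike.re (star v ⬝ᵥ v) := by
  have h := hA.re_dotProduct_cfc_mulVec (fun _ => 1) v
  rw [cfc_const_one ℝ A, one_mulVec] at h
  simpa using h.symm

lemma re_dotProduct_cfc_mulVec_eigenvectorBasis (hA : A.IsHermitian) (f : ℝ → ℝ) (i : n) :
    RCLike.re (star ⇑(hA.eigenvectorBasis i) ⬝ᵥ cfc f A *ᵥ ⇑(hA.eigenvectorBasis i)) =
      f (hA.eigenvalues i) := by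
  rw [hA.re_dotProduct_cfc_mulVec f, star_eigenvectorUnitary_mulVec,
    Finset.sum_eq_single i (fun j _ hj => by simp [hj]) (by simp)]
  simp

lemma star_eigenvectorBasis_dotProduct_self (hA : A.IsHermitian) (i : n) :
    star ⇑(hA.eigenvectorBasis i) ⬝ᵥ ⇑(hA.eigenvectorBasis i) = 1 := by
  rw [dotProduct_comm]
  exact inner_self_eq_one_of_norm_eq_one (hA.eigenvectorBasis.orthonormal.1 i)

lemma re_dotProduct_mulVec_eigenvectorBasis (hA : A.IsHermitian) (i : n) :
    RCLike.re (star ⇑(hA.eigenvectorBasis i) ⬝ᵥ A *ᵥ ⇑(hA.eigenvectorBasis i)) =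
      hA.eigenvalues i := by
  simp [hA.mulVec_eigenvectorBasis, hA.star_eigenvectorBasis_dotProduct_self, RCLike.smul_re]

lemma sum_dotProduct_mulVec_eigenvectorBasis (hA : A.IsHermitian) (Z : Matrix n n 𝕜) :
    ∑ i, star ⇑(hA.eigenvectorBasis i) ⬝ᵥ Z *ᵥ ⇑(hA.eigenvectorBasis i) = Z.trace := by
  set U : Matrix n n 𝕜 := (hA.eigenvectorUnitary : Matrix n n 𝕜)
  have : Z.trace = (star U * Z * U).trace := by
    rw [trace_mul_cycle, Unitary.mul_star_self_of_mem hA.eigenvectorUnitary.2, one_mul]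
  rw [this]
  simp [U, trace, mul_apply, dotProduct, mulVec, Finset.mul_sum, star_apply, mul_assoc]

lemma re_dotProduct_mulVec_mem (hA : A.IsHermitian) {s : Set ℝ} (hs : Convex ℝ s)
    (hAs : ∀ i, hA.eigenvalues i ∈ s) {v : n → 𝕜} (hv : star v ⬝ᵥ v = 1) :
    RCLike.re (star v ⬝ᵥ A *ᵥ v) ∈ s := by
  rw [← cfc_id' ℝ A, hA.re_dotProduct_cfc_mulVec]
  exact hs.sum_mem (fun i _ => sq_nonneg _)
    (by rw [sum_norm_sq_star_eigenvectorUnitary_mulVec, hv, RCLike.one_re]) (fun i _ => hAs i)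

lemma map_re_dotProduct_mulVec_le (hA : A.IsHermitian) {s : Set ℝ} {f : ℝ → ℝ}
    (hf : ConvexOn ℝ s f) (hAs : ∀ i, hA.eigenvalues i ∈ s) {v : n → 𝕜} (hv : star v ⬝ᵥ v = 1) :
    f (RCLike.re (star v ⬝ᵥ A *ᵥ v)) ≤ RCLike.re (star v ⬝ᵥ cfc f A *ᵥ v) := by
  rw [hA.re_dotProduct_cfc_mulVec f]
  conv_lhs => rw [← cfc_id' ℝ A, hA.re_dotProduct_cfc_mulVec]
  exact hf.map_sum_le (fun i _ => sq_nonneg _)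
    (by rw [sum_norm_sq_star_eigenvectorUnitary_mulVec, hv, RCLike.one_re]) (fun i _ => hAs i)

end Matrix.IsHermitian

namespace Matrix

variable {𝕜 : Type*} [RCLike 𝕜] {n : Type*} [Fintype n]

theorem IsHermitian.trace_mul_self_nonneg {A : Matrix n n 𝕜} (hA : A.IsHermitian) :
    0 ≤ (A * A).trace := by
  simpa only [hA.eq] using (posSemidef_conjTranspose_mul_self A).trace_nonneg

variable [DecidableEq n]

theorem re_trace_cfc_smul_add_smul_le {X Y : Matrix n n 𝕜} (hX : X.IsHermitian)
    (hY : Y.IsHermitian) {s : Set ℝ} {f : ℝ → ℝ} (hf : ConvexOn ℝ s f)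
    (hXs : ∀ i, hX.eigenvalues i ∈ s) (hYs : ∀ i, hY.eigenvalues i ∈ s) {a b : ℝ}
    (ha : 0 ≤ a) (hb : 0 ≤ b) (hab : a + b = 1) :
    RCLike.re (cfc f (a • X + b • Y)).trace ≤
      a * RCLike.re (cfc f X).trace + b * RCLike.re (cfc f Y).trace := by
  have hM : (a • X + b • Y).IsHermitian :=
    (hX.smul (IsSelfAdjoint.all a)).add (hY.smul (IsSelfAdjoint.all b))
  set u : n → n → 𝕜 := fun i => ⇑(hM.eigenvectorBasis i)
  set q : Matrix n n 𝕜 → n → ℝ := fun Z i => RCLike.re (star (u i) ⬝ᵥ Z *ᵥ u i)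
  have hre_trace (Z : Matrix n n 𝕜) : RCLike.re Z.trace = ∑ i, q Z i := by
    rw [← hM.sum_dotProduct_mulVec_eigenvectorBasis Z, map_sum]
  have hu (i : n) : star (u i) ⬝ᵥ u i = 1 := hM.star_eigenvectorBasis_dotProduct_self i
  have heig (i : n) : hM.eigenvalues i = a * q X i + b * q Y i := by
    rw [← hM.re_dotProduct_mulVec_eigenvectorBasis i]
    simp only [q, u, add_mulVec, smul_mulVec, dotProduct_add, dotProduct_smul, map_add,
      RCLike.smul_re]
  have hpoint (i : n) : f (hM.eigenvalues i) ≤ a * q (cfc f X) i + b * q (cfc f Y) i :=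
    calc f (hM.eigenvalues i) = f (a * q X i + b * q Y i) := by rw [heig]
      _ ≤ a * f (q X i) + b * f (q Y i) :=
        hf.2 (hX.re_dotProduct_mulVec_mem hf.1 hXs (hu i))
          (hY.re_dotProduct_mulVec_mem hf.1 hYs (hu i)) ha hb hab
      _ ≤ a * q (cfc f X) i + b * q (cfc f Y) i := by
        gcongr
        · exact hX.map_re_dotProduct_mulVec_le hf hXs (hu i)
        · exact hY.map_re_dotProduct_mulVec_le hf hYs (hu i)
  calc RCLike.re (cfc f (a • X + b • Y)).trace = ∑ i, f (hM.eigenvalues i) := by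
        rw [hre_trace]
        exact Finset.sum_congr rfl fun i _ => hM.re_dotProduct_cfc_mulVec_eigenvectorBasis f i
    _ ≤ ∑ i, (a * q (cfc f X) i + b * q (cfc f Y) i) := Finset.sum_le_sum fun i _ => hpoint i
    _ = a * RCLike.re (cfc f X).trace + b * RCLike.re (cfc f Y).trace := by
        rw [Finset.sum_add_distrib, ← Finset.mul_sum, ← Finset.mul_sum, hre_trace, hre_trace]

theorem PosSemidef.trace_mul_nonneg {A B : Matrix n n 𝕜} (hA : A.PosSemidef)
    (hB : B.PosSemidef) : 0 ≤ (A * B).trace := by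
  obtain ⟨S, rfl⟩ : ∃ S : Matrix n n 𝕜, A = Sᴴ * S :=
    ⟨CFC.sqrt A, by rw [(CFC.sqrt_nonneg A).posSemidef.1.eq, CFC.sqrt_mul_sqrt_self A hA.nonneg]⟩
  rw [Matrix.mul_assoc, trace_mul_comm]
  exact (hB.mul_mul_conjTranspose_same S).trace_nonneg

theorem re_trace_sub_mul_sub_le {A B C : Matrix n n 𝕜} (hA : A.PosSemidef) (hB : B.IsHermitian)
    {t : ℝ} (ht : 0 ≤ t) (hcross : t • A + (1 - t) • B ≤ C)
    (hsq : RCLike.re (C * C).trace ≤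
      t * RCLike.re (A * A).trace + (1 - t) * RCLike.re (B * B).trace) :
    RCLike.re ((A - C) * (A - C)).trace ≤ RCLike.re ((A - B) * (A - B)).trace := by
  have hAB := (RCLike.nonneg_iff.1 (hA.1.sub hB).trace_mul_self_nonneg).1
  have hAC := (RCLike.nonneg_iff.1 (hA.trace_mul_nonneg (le_iff.1 hcross))).1
  simp only [Matrix.mul_sub, Matrix.sub_mul, Matrix.mul_add, Matrix.mul_smul, trace_sub,
    trace_add, trace_smul, map_sub, map_add, RCLike.smul_re] at hAB hAC ⊢
  rw [trace_mul_comm C A, trace_mul_comm B A] at *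
  linarith [mul_nonneg ht hAB]

end Matrix

namespace CFC

variable {A : Type*} [PartialOrder A] [Ring A] [StarRing A] [TopologicalSpace A]
  [StarOrderedRing A] [Algebra ℝ A] [ContinuousFunctionalCalculus ℝ A IsSelfAdjoint]
  [NonnegSpectrumClass ℝ A] [IsSemitopologicalRing A] [T2Space A]

lemma rpow_rpow_one_div {a : A} (ha : 0 ≤ a) {p : ℝ} (hp : 0 < p) : (a ^ p) ^ (1 / p) = a := by
  rw [rpow_rpow_of_exponent_nonneg a p _ hp.le (by positivity) ha, mul_one_div_cancel hp.ne',
    rpow_one a ha]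

lemma rpow_mul_rpow_self {a : A} (ha : 0 ≤ a) {x : ℝ} (hx : 0 ≤ x) :
    a ^ x * a ^ x = a ^ (x * 2) := by
  rw [← pow_two, ← rpow_natCast _ 2 rpow_nonneg, Nat.cast_ofNat,
    rpow_rpow_of_exponent_nonneg a x 2 hx zero_le_two ha]

end CFC

section PowerMean

variable {n : Type*} [Fintype n] [DecidableEq n] {A B : Matrix n n ℂ} {p t : ℝ}

noncomputable def powerMean (p t : ℝ) (A B : Matrix n n ℂ) : Matrix n n ℂ :=
  (t • A ^ p + (1 - t) • B ^ p) ^ (1 / p)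

lemma smul_rpow_add_smul_rpow_nonneg (ht : t ∈ Set.Icc (0 : ℝ) 1) :
    0 ≤ t • A ^ p + (1 - t) • B ^ p :=
  add_nonneg (smul_nonneg ht.1 CFC.rpow_nonneg) (smul_nonneg (sub_nonneg.2 ht.2) CFC.rpow_nonneg)

open scoped Matrix.Norms.L2Operator in
lemma smul_rpow_add_smul_rpow_le (hA : 0 ≤ A) (hB : 0 ≤ B) {q : ℝ} (hq : q ∈ Set.Icc (0 : ℝ) 1)
    (ht : t ∈ Set.Icc (0 : ℝ) 1) : t • A ^ q + (1 - t) • B ^ q ≤ (t • A + (1 - t) • B) ^ q :=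
  (CFC.concaveOn_rpow hq).2 hA hB ht.1 (sub_nonneg.2 ht.2) (add_sub_cancel t 1)

lemma smul_add_smul_le_powerMean (hA : 0 ≤ A) (hB : 0 ≤ B) (hp : 1 ≤ p)
    (ht : t ∈ Set.Icc (0 : ℝ) 1) : t • A + (1 - t) • B ≤ powerMean p t A B := by
  have hp0 : 0 < p := one_pos.trans_le hp
  have h := smul_rpow_add_smul_rpow_le (q := 1 / p) (CFC.rpow_nonneg (a := A) (y := p))
    (CFC.rpow_nonneg (a := B) (y := p)) ⟨by positivity, (div_le_one hp0).2 hp⟩ ht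
  rwa [CFC.rpow_rpow_one_div hA hp0, CFC.rpow_rpow_one_div hB hp0] at h

lemma re_trace_powerMean_mul_self_le (hA : 0 ≤ A) (hB : 0 ≤ B) (hp : p ∈ Set.Icc (1 : ℝ) 2)
    (ht : t ∈ Set.Icc (0 : ℝ) 1) :
    RCLike.re (powerMean p t A B * powerMean p t A B).trace ≤
      t * RCLike.re (A * A).trace + (1 - t) * RCLike.re (B * B).trace := by
  have hp0 : 0 < p := one_pos.trans_le hp.1
  have hX := (CFC.rpow_nonneg : 0 ≤ A ^ p).posSemidef
  have hY := (CFC.rpow_nonneg : 0 ≤ B ^ p).posSemidef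
  have hexp : 1 ≤ 1 / p * 2 := by
    rw [div_mul_eq_mul_div, one_mul, le_div_iff₀ hp0]
    linarith [hp.2]
  have hsquare {C : Matrix n n ℂ} (hC : 0 ≤ C) : C * C = (C ^ p) ^ (1 / p * 2) := by
    rw [← CFC.rpow_mul_rpow_self (CFC.rpow_nonneg (a := C) (y := p)) (x := 1 / p) (by positivity),
      CFC.rpow_rpow_one_div hC hp0]
  have key := re_trace_cfc_smul_add_smul_le hX.1 hY.1 (convexOn_rpow hexp)
    hX.eigenvalues_nonneg hY.eigenvalues_nonneg ht.1 (sub_nonneg.2 ht.2) (add_sub_cancel t 1)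
  have hM := smul_rpow_add_smul_rpow_nonneg (A := A) (B := B) (p := p) ht
  rwa [← CFC.rpow_eq_cfc_real hM, ← CFC.rpow_eq_cfc_real CFC.rpow_nonneg,
    ← CFC.rpow_eq_cfc_real CFC.rpow_nonneg, ← hsquare hA, ← hsquare hB,
    ← CFC.rpow_mul_rpow_self hM (by positivity)] at key

end PowerMean

lemma matFun_eq_cfc {n : ℕ} {A : Matrix (Fin n) (Fin n) ℂ} (hA : A.IsHermitian) (g : ℝ → ℝ) :
    matFun A hA g = cfc g A := by
  rw [hA.cfc_eq]
  rfl

lemma mpow_eq_rpow {n : ℕ} {A : Matrix (Fin n) (Fin n) ℂ} (hA : A.IsHermitian) (hA0 : 0 ≤ A)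
    (p : ℝ) : mpow A hA p = A ^ p := by
  rw [mpow, matFun_eq_cfc, CFC.rpow_eq_cfc_real hA0]

theorem stmt5 {n : ℕ} (A B : Matrix (Fin n) (Fin n) ℂ)
    (hA : A.PosDef) (hB : B.PosDef) (p t : ℝ)
    (hp : p ∈ Set.Icc (1:ℝ) 2) (ht : t ∈ Set.Icc (0:ℝ) 1)
    (hM : (t • mpow A hA.1 p + (1 - t) • mpow B hB.1 p).IsHermitian) :
    (Matrix.trace ((A - mpow _ hM (1/p)) * (A - mpow _ hM (1/p)))).re ≤
      (Matrix.trace ((A - B) * (A - B))).re := by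
  have hA0 : 0 ≤ A := hA.posSemidef.nonneg
  have hB0 : 0 ≤ B := hB.posSemidef.nonneg
  have hM0 : 0 ≤ t • mpow A hA.1 p + (1 - t) • mpow B hB.1 p := by
    rw [mpow_eq_rpow _ hA0, mpow_eq_rpow _ hB0]
    exact smul_rpow_add_smul_rpow_nonneg ht
  rw [mpow_eq_rpow _ hM0, mpow_eq_rpow _ hA0, mpow_eq_rpow _ hB0]
  exact re_trace_sub_mul_sub_le hA.posSemidef hB.1 ht.1
    (smul_add_smul_le_powerMean hA0 hB0 hp.1 ht) (re_trace_powerMean_mul_self_le hA0 hB0 hp ht)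
end

section
/- For positive definite matrices A, B, the function g(x) = trace(A^(2x) · B^(2(1-x))) is log-convex on ℝ: for all x, y, g((x+y)/2)² ≤ g(x)·g(y). -/
/-! Put `X s = A ^ s * B ^ (1 - s)`. Real powers of a positive definite matrix are Hermitian
and add exponents, so cyclicity of the trace gives
`tr ((X a)ᴴ * X b) = tr (A ^ (a + b) * B ^ (2 - (a + b)))`. The inequality is therefore the
Cauchy–Schwarz inequality for the Frobenius inner product `⟪X, Y⟫ = tr (Xᴴ * Y)`, applied to
`X x` and `X y`. -/

open Matrix MeasureTheory
open scoped ComplexOrder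

theorem re_trace_conjTranspose_mul_sq_le {𝕜 m : Type*} [RCLike 𝕜] [Fintype m]
    (X Y : Matrix m m 𝕜) :
    RCLike.re (Xᴴ * Y).trace ^ 2 ≤ RCLike.re (Xᴴ * X).trace * RCLike.re (Yᴴ * Y).trace := by
  classical
  -- Mathlib's inner product weighted by `M = 1`, i.e. `⟪Z, W⟫ = tr (W * M * Zᴴ)`.
  let _ := toMatrixSeminormedAddCommGroup (1 : Matrix m m 𝕜) PosSemidef.one
  let _ := toMatrixInnerProductSpace (1 : Matrix m m 𝕜) PosSemidef.one
  have hinner (Z W : Matrix m m 𝕜) : (Zᴴ * W).trace = inner 𝕜 Z W :=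
    calc (Zᴴ * W).trace = (W * 1 * Zᴴ).trace := by rw [mul_one, trace_mul_comm]
      _ = inner 𝕜 Z W := rfl
  simp only [hinner]
  calc RCLike.re (inner 𝕜 X Y) ^ 2 ≤ ‖inner 𝕜 X Y‖ ^ 2 := by
        rw [← sq_abs]; gcongr; exact RCLike.abs_re_le_norm _
    _ ≤ _ := by
      rw [sq]; simpa [norm_inner_symm] using inner_mul_inner_self_le X Y

section matFun

variable {n : ℕ} (A : Matrix (Fin n) (Fin n) ℂ) (hA : A.IsHermitian)

lemma matFun_mul_matFun (f g : ℝ → ℝ) :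
    matFun A hA f * matFun A hA g = matFun A hA (fun t => f t * g t) := by
  have hU : star (hA.eigenvectorUnitary : Matrix (Fin n) (Fin n) ℂ) *
      (hA.eigenvectorUnitary : Matrix (Fin n) (Fin n) ℂ) = 1 :=
    Unitary.coe_star_mul_self hA.eigenvectorUnitary
  simp only [matFun, Matrix.mul_assoc]
  rw [← Matrix.mul_assoc (star _) _ _, hU, Matrix.one_mul,
    ← Matrix.mul_assoc (diagonal _) (diagonal _) _, diagonal_mul_diagonal]
  push_cast
  rfl

lemma conjTranspose_matFun (f : ℝ → ℝ) : (matFun A hA f)ᴴ = matFun A hA f := by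
  simp only [matFun, star_eq_conjTranspose, conjTranspose_mul, conjTranspose_conjTranspose,
    diagonal_conjTranspose, Matrix.mul_assoc]
  congr 3
  ext i
  simp

end matFun

section mpow

variable {n : ℕ} {A : Matrix (Fin n) (Fin n) ℂ}

lemma conjTranspose_mpow (hA : A.IsHermitian) (p : ℝ) : (mpow A hA p)ᴴ = mpow A hA p :=
  conjTranspose_matFun A hA _

lemma mpow_add (hA : A.PosDef) (p q : ℝ) :
    mpow A hA.1 (p + q) = mpow A hA.1 p * mpow A hA.1 q := by
  simp only [mpow, matFun_mul_matFun]
  unfold matFun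
  congr 3
  funext i
  beta_reduce
  rw [Real.rpow_add (hA.eigenvalues_pos i), Complex.ofReal_mul]

lemma trace_conjTranspose_mpow_mul_mpow_mul {B : Matrix (Fin n) (Fin n) ℂ} (hA : A.PosDef)
    (hB : B.PosDef) (a b : ℝ) :
    ((mpow A hA.1 a * mpow B hB.1 (1 - a))ᴴ * (mpow A hA.1 b * mpow B hB.1 (1 - b))).trace =
      (mpow A hA.1 (a + b) * mpow B hB.1 (2 - (a + b))).trace := by
  rw [conjTranspose_mul, conjTranspose_mpow, conjTranspose_mpow, Matrix.mul_assoc,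
    ← Matrix.mul_assoc (mpow A _ a), ← mpow_add hA, trace_mul_comm, Matrix.mul_assoc,
    ← mpow_add hB]
  congr 3
  ring

end mpow

theorem stmt10 {n : ℕ} (A B : Matrix (Fin n) (Fin n) ℂ)
    (hA : A.PosDef) (hB : B.PosDef) (x y : ℝ) :
    (Matrix.trace (mpow A hA.1 (2 * ((x + y) / 2)) *
        mpow B hB.1 (2 * (1 - (x + y) / 2)))).re ^ 2 ≤
      (Matrix.trace (mpow A hA.1 (2 * x) * mpow B hB.1 (2 * (1 - x)))).re *
        (Matrix.trace (mpow A hA.1 (2 * y) * mpow B hB.1 (2 * (1 - y)))).re := by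
  have h := re_trace_conjTranspose_mul_sq_le (mpow A hA.1 x * mpow B hB.1 (1 - x))
    (mpow A hA.1 y * mpow B hB.1 (1 - y))
  simp only [trace_conjTranspose_mpow_mul_mpow_mul hA hB, RCLike.re_to_complex] at h
  convert h using 6 <;> ring
end

section
/- For positive definite matrices A, B and ν ∈ [0,1], trace(B²) + 2·trace(A^(1+ν)·B^(1-ν)) ≥ trace(A^(2ν)·B^(2(1-ν))) + 2·trace(AB). -/
open Matrix MeasureTheory
open scoped ComplexOrder

/-!
With spectral decompositions `A = ∑ aᵢ uᵢ uᵢ*` and `B = ∑ bⱼ vⱼ vⱼ*`, every trace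
`tr (f(A) g(B))` equals `∑ f(aᵢ) g(bⱼ) |⟨uᵢ, vⱼ⟩|²`; this covers `tr (B²)` as well, taking
`f = 1`. The weights are nonnegative, so the matrix inequality follows from the scalar one.
For `a, b > 0` the number `x = a^ν b^(1-ν)` lies between `a` and `b`, hence
`(a - x)² ≤ (a - b)²`, and expanding this gives the scalar inequality.
-/

namespace Real

theorem rpow_mul_rpow_one_sub_mem_uIcc {a b ν : ℝ} (ha : 0 ≤ a) (hb : 0 ≤ b) (hν0 : 0 ≤ ν)
    (hν1 : ν ≤ 1) : a ^ ν * b ^ (1 - ν) ∈ Set.uIcc a b := by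
  have hν1' : 0 ≤ 1 - ν := by linarith
  have self_eq : ∀ c : ℝ, 0 ≤ c → c ^ ν * c ^ (1 - ν) = c := fun c hc => by
    rw [← rpow_add' hc (by norm_num), add_sub_cancel, rpow_one]
  constructor
  · calc min a b = min a b ^ ν * min a b ^ (1 - ν) := (self_eq _ (le_min ha hb)).symm
      _ ≤ a ^ ν * b ^ (1 - ν) := by gcongr <;> first | exact le_min ha hb | simp
  · calc a ^ ν * b ^ (1 - ν) ≤ max a b ^ ν * max a b ^ (1 - ν) := by gcongr <;> simp
      _ = max a b := self_eq _ (ha.trans (le_max_left a b))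

theorem rpow_two_mul_mul_rpow_add_two_mul_le {a b ν : ℝ} (ha : 0 < a) (hb : 0 < b)
    (hν0 : 0 ≤ ν) (hν1 : ν ≤ 1) :
    a ^ (2 * ν) * b ^ (2 * (1 - ν)) + 2 * (a * b) ≤ b * b + 2 * (a ^ (1 + ν) * b ^ (1 - ν)) := by
  set x := a ^ ν * b ^ (1 - ν)
  have hx : |x - a| ≤ |b - a| :=
    Set.abs_sub_left_of_mem_uIcc (rpow_mul_rpow_one_sub_mem_uIcc ha.le hb.le hν0 hν1)
  have hsq : a ^ (2 * ν) * b ^ (2 * (1 - ν)) = x ^ 2 := by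
    rw [mul_pow, ← rpow_natCast, ← rpow_natCast, ← rpow_mul ha.le, ← rpow_mul hb.le]
    ring_nf
  have hax : a ^ (1 + ν) * b ^ (1 - ν) = a * x := by
    rw [rpow_add ha, rpow_one, mul_assoc]
  rw [hsq, hax]
  nlinarith [sq_le_sq.mpr hx]

end Real

namespace Matrix

theorem trace_conj_diagonal_mul_conj_diagonal {ι R : Type*} [Fintype ι] [DecidableEq ι]
    [CommSemiring R] [StarRing R] (U V : Matrix ι ι R) (d e : ι → R) :
    trace (U * diagonal d * star U * (V * diagonal e * star V)) =
      ∑ i, ∑ j, d i * e j * ((star U * V) i j * star ((star U * V) i j)) := by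
  have h : U * diagonal d * star U * (V * diagonal e * star V) =
      U * (diagonal d * (star U * V) * diagonal e * star V) := by
    simp only [Matrix.mul_assoc]
  have h' : star V * U = star (star U * V) := by rw [star_mul, star_star]
  rw [h, trace_mul_comm, Matrix.mul_assoc _ (star V), h']
  generalize star U * V = M
  simp only [trace, diag_apply, mul_apply, diagonal_apply, ite_mul, zero_mul, mul_ite, mul_zero,
    Finset.sum_ite_eq, Finset.sum_ite_eq', Finset.mem_univ, if_true, star_apply]
  exact Finset.sum_congr rfl fun i _ => Finset.sum_congr rfl fun j _ => by ring

namespace IsHermitian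

variable {n : ℕ} {A B : Matrix (Fin n) (Fin n) ℂ}

theorem matFun_id (hA : A.IsHermitian) : matFun A hA (fun x => x) = A := by
  have h := hA.spectral_theorem
  rw [Unitary.conjStarAlgAut_apply] at h
  exact h.symm

theorem matFun_one (hA : A.IsHermitian) : matFun A hA (fun _ => 1) = 1 := by
  simp [matFun]

theorem matFun_mul (hA : A.IsHermitian) (f g : ℝ → ℝ) :
    matFun A hA f * matFun A hA g = matFun A hA (fun x => f x * g x) := by
  have hU := mem_unitaryGroup_iff'.mp hA.eigenvectorUnitary.2
  simp only [matFun, Matrix.mul_assoc]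
  rw [← Matrix.mul_assoc (star _) _, hU, Matrix.one_mul, ← Matrix.mul_assoc (diagonal _),
    diagonal_mul_diagonal]
  simp

noncomputable def eigenvectorOverlap (hA : A.IsHermitian) (hB : B.IsHermitian) (i j : Fin n) :
    ℝ :=
  Complex.normSq ((star (hA.eigenvectorUnitary : Matrix (Fin n) (Fin n) ℂ) *
    (hB.eigenvectorUnitary : Matrix (Fin n) (Fin n) ℂ)) i j)

theorem eigenvectorOverlap_nonneg (hA : A.IsHermitian) (hB : B.IsHermitian) (i j : Fin n) :
    0 ≤ eigenvectorOverlap hA hB i j :=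
  Complex.normSq_nonneg _

theorem re_trace_matFun_mul_matFun (hA : A.IsHermitian) (hB : B.IsHermitian) (f g : ℝ → ℝ) :
    (trace (matFun A hA f * matFun B hB g)).re =
      ∑ i, ∑ j, f (hA.eigenvalues i) * g (hB.eigenvalues j) * eigenvectorOverlap hA hB i j := by
  simp only [matFun, trace_conj_diagonal_mul_conj_diagonal, Complex.re_sum, eigenvectorOverlap]
  refine Finset.sum_congr rfl fun i _ => Finset.sum_congr rfl fun j _ => ?_
  rw [Complex.star_def, Complex.mul_conj]
  norm_cast

end IsHermitian

end Matrix

open Matrix.IsHermitian in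
theorem stmt12 {n : ℕ} (A B : Matrix (Fin n) (Fin n) ℂ)
    (hA : A.PosDef) (hB : B.PosDef) (ν : ℝ) (hν : ν ∈ Set.Icc (0:ℝ) 1) :
    (Matrix.trace (mpow A hA.1 (2 * ν) * mpow B hB.1 (2 * (1 - ν)))).re +
        2 * (Matrix.trace (A * B)).re ≤
      (Matrix.trace (B * B)).re +
        2 * (Matrix.trace (mpow A hA.1 (1 + ν) * mpow B hB.1 (1 - ν))).re := by
  have hAB : A * B = matFun A hA.1 (fun x => x) * matFun B hB.1 (fun x => x) := by
    rw [hA.1.matFun_id, hB.1.matFun_id]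
  have hBB : B * B = matFun A hA.1 (fun _ => 1) * matFun B hB.1 (fun x => x * x) := by
    rw [hA.1.matFun_one, Matrix.one_mul, ← hB.1.matFun_mul, hB.1.matFun_id]
  simp only [mpow, hAB, hBB, re_trace_matFun_mul_matFun, Finset.mul_sum, ← Finset.sum_add_distrib]
  refine Finset.sum_le_sum fun i _ => Finset.sum_le_sum fun j _ => ?_
  have hscalar := Real.rpow_two_mul_mul_rpow_add_two_mul_le (hA.eigenvalues_pos i)
    (hB.eigenvalues_pos j) hν.1 hν.2
  nlinarith [mul_le_mul_of_nonneg_right hscalar (eigenvectorOverlap_nonneg hA.1 hB.1 i j)]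
end

section
/- For positive definite matrices A, B, the function g(x) = trace(A^(2x)·B^(2(1-x))) is convex on ℝ. -/
open Matrix MeasureTheory
open scoped ComplexOrder

/-! Diagonalising `A = U diag(λ) U*` and `B = V diag(μ) V*` gives
`tr (A^(2x) B^(2(1-x))) = ∑ i j, |(U* V) i j|² λᵢ^(2x) μⱼ^(2(1-x))`, a nonnegative combination of
the functions `x ↦ exp (2x log λᵢ + 2(1-x) log μⱼ)`, each convex as `exp` of an affine function. -/

theorem ConvexOn.sum {𝕜 E β ι : Type*} [Semiring 𝕜] [PartialOrder 𝕜] [AddCommMonoid E]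
    [AddCommMonoid β] [PartialOrder β] [IsOrderedAddMonoid β] [SMul 𝕜 E] [Module 𝕜 β]
    {s : Set E} (t : Finset ι) {f : ι → E → β} (hs : Convex 𝕜 s)
    (hf : ∀ i ∈ t, ConvexOn 𝕜 s (f i)) : ConvexOn 𝕜 s (fun x => ∑ i ∈ t, f i x) := by
  simpa only [← Finset.sum_apply] using
    Finset.sum_induction f (ConvexOn 𝕜 s) (fun _ _ => ConvexOn.add) (convexOn_const 0 hs) hf

lemma convexOn_rpow_mul_rpow_one_sub {a b : ℝ} (ha : 0 < a) (hb : 0 < b) :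
    ConvexOn ℝ Set.univ (fun x : ℝ => a ^ x * b ^ (1 - x)) := by
  have hexp : (fun x : ℝ => a ^ x * b ^ (1 - x)) =
      Real.exp ∘ AffineMap.lineMap (Real.log b) (Real.log a) := by
    ext x
    simp only [Function.comp_apply, AffineMap.lineMap_apply_module, smul_eq_mul,
      Real.rpow_def_of_pos ha, Real.rpow_def_of_pos hb, ← Real.exp_add]
    ring_nf
  simpa only [hexp, Set.preimage_univ] using convexOn_exp.comp_affineMap _

lemma trace_diagonal_mul_mul_diagonal_mul_conjTranspose {ι : Type*} [Fintype ι] [DecidableEq ι]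
    (d e : ι → ℝ) (M : Matrix ι ι ℂ) :
    trace (diagonal (fun i => (d i : ℂ)) * M * diagonal (fun j => (e j : ℂ)) * Mᴴ) =
      ∑ i, ∑ j, ((Complex.normSq (M i j) * (d i * e j) : ℝ) : ℂ) := by
  refine Finset.sum_congr rfl fun i _ => ?_
  simp only [diag, mul_apply (M := _ * _ * _), mul_diagonal, diagonal_mul, conjTranspose_apply]
  refine Finset.sum_congr rfl fun j _ => ?_
  push_cast
  rw [Complex.normSq_eq_conj_mul_self, Complex.star_def]
  ring

lemma re_trace_matFun_mul_matFun {n : ℕ} {A B : Matrix (Fin n) (Fin n) ℂ}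
    (hA : A.IsHermitian) (hB : B.IsHermitian) (f g : ℝ → ℝ) :
    (trace (matFun A hA f * matFun B hB g)).re =
      ∑ i, ∑ j, Complex.normSq ((star (hA.eigenvectorUnitary : Matrix (Fin n) (Fin n) ℂ) *
        hB.eigenvectorUnitary) i j) * (f (hA.eigenvalues i) * g (hB.eigenvalues j)) := by
  set U := (hA.eigenvectorUnitary : Matrix (Fin n) (Fin n) ℂ)
  set V := (hB.eigenvectorUnitary : Matrix (Fin n) (Fin n) ℂ)
  set D := diagonal (fun i => (f (hA.eigenvalues i) : ℂ))
  set E := diagonal (fun j => (g (hB.eigenvalues j) : ℂ))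
  have hcycle : trace (matFun A hA f * matFun B hB g) =
      trace (D * (star U * V) * E * (star U * V)ᴴ) := by
    have : matFun A hA f * matFun B hB g = U * (D * star U * V * E * star V) := by
      simp only [matFun, mul_assoc]; rfl
    rw [this, trace_mul_comm]
    simp only [← star_eq_conjTranspose, star_mul, star_star, mul_assoc]
  rw [hcycle, trace_diagonal_mul_mul_diagonal_mul_conjTranspose]
  norm_cast

theorem stmt13 {n : ℕ} (A B : Matrix (Fin n) (Fin n) ℂ)
    (hA : A.PosDef) (hB : B.PosDef) :
    ConvexOn ℝ Set.univ
      (fun x : ℝ =>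
        (Matrix.trace (mpow A hA.1 (2 * x) * mpow B hB.1 (2 * (1 - x)))).re) := by
  simp only [mpow, re_trace_matFun_mul_matFun]
  refine ConvexOn.sum _ convex_univ fun i _ => ConvexOn.sum _ convex_univ fun j _ => ?_
  have hAi := hA.eigenvalues_pos i
  have hBj := hB.eigenvalues_pos j
  simp only [Real.rpow_mul hAi.le, Real.rpow_mul hBj.le]
  exact (convexOn_rpow_mul_rpow_one_sub (by positivity) (by positivity)).smul
    (Complex.normSq_nonneg _)
end

section
/- Let f : (0,∞) → (0,∞) be a function such that x ≤ f(x) ≤ 1 for all x ∈ (0,1] and 1 ≤ f(x) ≤ x for all x ≥ 1. Then for every positive definite matrix C, ‖log f(C)‖₂ ≤ ‖log C‖₂, where f(C) and log are defined via spectral calculus and ‖·‖₂ is the Frobenius norm. -/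
open Matrix MeasureTheory
open scoped ComplexOrder

lemma frob_matFun {n : ℕ} (A : Matrix (Fin n) (Fin n) ℂ) (hA : A.IsHermitian)
    (g : ℝ → ℝ) :
    frob (matFun A hA g) = Real.sqrt (∑ i, (g (hA.eigenvalues i)) ^ 2) := by
  set U : Matrix (Fin n) (Fin n) ℂ := (hA.eigenvectorUnitary : Matrix (Fin n) (Fin n) ℂ)
  set D : Matrix (Fin n) (Fin n) ℂ :=
    Matrix.diagonal (fun i => (g (hA.eigenvalues i) : ℂ))
  have hUU : star U * U = 1 := Matrix.UnitaryGroup.star_mul_self _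
  have key : star (matFun A hA g) * matFun A hA g = U * (star D * D) * star U := by
    show star (U * D * star U) * (U * D * star U) = _
    rw [StarMul.star_mul, StarMul.star_mul, star_star]
    calc U * (star D * star U) * (U * D * star U)
        = U * star D * (star U * U) * D * star U := by
          simp only [Matrix.mul_assoc]
      _ = U * (star D * D) * star U := by rw [hUU]; simp only [Matrix.mul_one, Matrix.mul_assoc]
  have htr : (Matrix.trace (star (matFun A hA g) * matFun A hA g)).re
      = ∑ i, (g (hA.eigenvalues i)) ^ 2 := by
    rw [key, Matrix.trace_mul_cycle, ← Matrix.mul_assoc, hUU, Matrix.one_mul]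
    have : star D * D = Matrix.diagonal (fun i => ((g (hA.eigenvalues i)) ^ 2 : ℂ)) := by
      simp [D, Matrix.star_eq_conjTranspose, Matrix.diagonal_conjTranspose,
        Matrix.diagonal_mul_diagonal, ← Complex.ofReal_pow, sq]
    rw [this, Matrix.trace_diagonal]
    rw [Complex.re_sum]
    congr 1; ext i
    rw [← Complex.ofReal_pow, Complex.ofReal_re]
  rw [frob, htr]

theorem stmt17 {n : ℕ} (f : ℝ → ℝ)
    (h1 : ∀ x : ℝ, 0 < x → x ≤ 1 → x ≤ f x ∧ f x ≤ 1)
    (h2 : ∀ x : ℝ, 1 ≤ x → 1 ≤ f x ∧ f x ≤ x)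
    (C : Matrix (Fin n) (Fin n) ℂ) (hC : C.PosDef) :
    frob (matFun C hC.1 (fun x => Real.log (f x))) ≤ frob (matFun C hC.1 Real.log) := by
  rw [frob_matFun, frob_matFun]
  apply Real.sqrt_le_sqrt
  apply Finset.sum_le_sum
  intro i _
  have hpos : 0 < hC.1.eigenvalues i := hC.eigenvalues_pos i
  set x := hC.1.eigenvalues i
  have : |Real.log (f x)| ≤ |Real.log x| := by
    rcases le_or_gt x 1 with hx | hx
    · obtain ⟨ha, hb⟩ := h1 x hpos hx
      have hf0 : 0 < f x := lt_of_lt_of_le hpos ha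
      have l1 : Real.log x ≤ Real.log (f x) := Real.log_le_log hpos ha
      have l2 : Real.log (f x) ≤ 0 := Real.log_nonpos hf0.le hb
      rw [abs_of_nonpos l2, abs_of_nonpos (l1.trans l2)]
      linarith
    · obtain ⟨ha, hb⟩ := h2 x hx.le
      have l1 : 0 ≤ Real.log (f x) := Real.log_nonneg ha
      have l2 : Real.log (f x) ≤ Real.log x := Real.log_le_log (by linarith) hb
      rw [abs_of_nonneg l1, abs_of_nonneg (l1.trans l2)]
      exact l2
  calc Real.log (f x) ^ 2 = |Real.log (f x)| ^ 2 := (sq_abs _).symm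
    _ ≤ |Real.log x| ^ 2 := by
        exact pow_le_pow_left₀ (abs_nonneg _) this 2
    _ = Real.log x ^ 2 := sq_abs _
end
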